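/- Let c ∈ ℝ, let A ∈ ℝ be a constant with −c + h_i·e^A > 0 for every i ∈ V, and let ψ : V → ℝ satisfy (Δψ)_i − c + h_i·e^{ψ_i} < 0 for every i ∈ V and A ≤ ψ_i for all i. If u minimizes the functional I(f) = (1/2)·Σ_{{i,j}∈E} ω_{ij}(f_i − f_j)² + c·Σ_{i∈V} μ_i f_i − Σ_{i∈V} μ_i h_i e^{f_i} (first sum over unordered edges) over the set K = {f : V → ℝ : A ≤ f_i ≤ ψ_i for all i}, then A < u_i < ψ_i for every vertex i ∈ V. -/
import Mathlib

noncomputable def glap {V : Type*} [Fintype V] (G : SimpleGraph V) [DecidableRel G.Adj]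
    (μ : V → ℝ) (ω : V → V → ℝ) (f : V → ℝ) (i : V) : ℝ :=
  (1 / μ i) * ∑ j ∈ G.neighborFinset i, ω i j * (f j - f i)

noncomputable def kwEnergy {V : Type*} [Fintype V] (G : SimpleGraph V) [DecidableRel G.Adj]
    (μ : V → ℝ) (ω : V → V → ℝ) (c : ℝ) (h : V → ℝ) (f : V → ℝ) : ℝ :=
  (1 / 4) * ∑ i, ∑ j ∈ G.neighborFinset i, ω i j * (f i - f j) ^ 2
    + c * ∑ i, μ i * f i - ∑ i, μ i * h i * Real.exp (f i)

lemma exp_lin_bound {s : ℝ} (hs : |s| ≤ 1) : |Real.exp s - 1 - s| ≤ s ^ 2 := by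
  have h := Real.exp_bound hs (n := 2) (by norm_num)
  simp [Finset.sum_range_succ] at h
  calc |Real.exp s - 1 - s| = |Real.exp s - (1 + s)| := by ring_nf
    _ ≤ |s| ^ 2 * (3 / (2 * 2)) := by convert h using 2 <;> norm_num
    _ ≤ s ^ 2 := by rw [sq_abs]; nlinarith [sq_nonneg s]

lemma kwEnergy_update {V : Type*} [Fintype V] [DecidableEq V] (G : SimpleGraph V)
    [DecidableRel G.Adj] (μ : V → ℝ) (ω : V → V → ℝ) (hsym : ∀ i j, ω i j = ω j i)
    (c : ℝ) (h : V → ℝ) (u : V → ℝ) (i : V) (s : ℝ) :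
    kwEnergy G μ ω c h (Function.update u i (u i + s)) =
      kwEnergy G μ ω c h u
        + (s * ∑ j ∈ G.neighborFinset i, ω i j * (u i - u j)
          + s ^ 2 / 2 * ∑ j ∈ G.neighborFinset i, ω i j
          + c * (μ i * s)
          - μ i * h i * (Real.exp (u i + s) - Real.exp (u i))) := by
  classical
  set f := Function.update u i (u i + s) with hf
  have hfi : f i = u i + s := Function.update_self i _ u
  have hfne : ∀ k, k ≠ i → f k = u k := fun k hk => Function.update_of_ne hk _ u
  have hQ : ∑ k, ∑ j ∈ G.neighborFinset k, ω k j * (f k - f j) ^ 2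
      = ∑ k, ∑ j ∈ G.neighborFinset k, ω k j * (u k - u j) ^ 2
        + (4 * s * ∑ j ∈ G.neighborFinset i, ω i j * (u i - u j)
           + 2 * s ^ 2 * ∑ j ∈ G.neighborFinset i, ω i j) := by
    have hdiff : ∑ k, (∑ j ∈ G.neighborFinset k, ω k j * (f k - f j) ^ 2
        - ∑ j ∈ G.neighborFinset k, ω k j * (u k - u j) ^ 2)
        = 4 * s * ∑ j ∈ G.neighborFinset i, ω i j * (u i - u j)
           + 2 * s ^ 2 * ∑ j ∈ G.neighborFinset i, ω i j := by
      rw [← Finset.sum_erase_add _ _ (Finset.mem_univ i)]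
      have h1 : ∀ k ∈ Finset.univ.erase i,
          (∑ j ∈ G.neighborFinset k, ω k j * (f k - f j) ^ 2
            - ∑ j ∈ G.neighborFinset k, ω k j * (u k - u j) ^ 2)
          = if k ∈ G.neighborFinset i then ω i k * (2 * s * (u i - u k) + s ^ 2) else 0 := by
        intro k hk
        have hki : k ≠ i := Finset.ne_of_mem_erase hk
        rw [← Finset.sum_sub_distrib]
        have : ∀ j ∈ G.neighborFinset k,
            ω k j * (f k - f j) ^ 2 - ω k j * (u k - u j) ^ 2
            = if j = i then ω i k * (2 * s * (u i - u k) + s ^ 2) else 0 := by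
          intro j hj
          by_cases hji : j = i
          · rw [hji, if_pos rfl, hfne k hki, hfi, hsym k i]
            ring
          · rw [hfne k hki, hfne j hji, if_neg hji]
            ring
        rw [Finset.sum_congr rfl this, Finset.sum_ite_eq' (G.neighborFinset k) i]
        congr 1
        simp [SimpleGraph.mem_neighborFinset, SimpleGraph.adj_comm]
      rw [Finset.sum_congr rfl h1]
      have h2 : ∑ k ∈ Finset.univ.erase i,
          (if k ∈ G.neighborFinset i then ω i k * (2 * s * (u i - u k) + s ^ 2) else 0)
          = ∑ k ∈ G.neighborFinset i, ω i k * (2 * s * (u i - u k) + s ^ 2) := by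
        have hi0 : (if i ∈ G.neighborFinset i then ω i i * (2 * s * (u i - u i) + s ^ 2) else 0)
            = 0 := by simp
        rw [Finset.sum_erase_eq_sub (Finset.mem_univ i), hi0, sub_zero,
          Finset.sum_ite_mem, Finset.univ_inter]
      rw [h2]
      have h3 : ∑ j ∈ G.neighborFinset i, ω i j * (f i - f j) ^ 2
          - ∑ j ∈ G.neighborFinset i, ω i j * (u i - u j) ^ 2
          = ∑ j ∈ G.neighborFinset i, ω i j * (2 * s * (u i - u j) + s ^ 2) := by
        rw [← Finset.sum_sub_distrib]
        refine Finset.sum_congr rfl fun j hj => ?_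
        have hji : j ≠ i := by rintro rfl; simp at hj
        rw [hfi, hfne j hji]; ring
      rw [h3, ← Finset.sum_add_distrib, Finset.mul_sum, Finset.mul_sum,
        ← Finset.sum_add_distrib]
      refine Finset.sum_congr rfl fun j hj => ?_
      ring
    rw [Finset.sum_sub_distrib] at hdiff
    linarith [hdiff]
  have hL : ∑ k, μ k * f k = ∑ k, μ k * u k + μ i * s := by
    have : ∑ k, (μ k * f k - μ k * u k) = μ i * s := by
      rw [Finset.sum_eq_single i]
      · rw [hfi]; ring
      · intro k _ hk; rw [hfne k hk]; ring
      · intro hi; exact absurd (Finset.mem_univ i) hi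
    rw [Finset.sum_sub_distrib] at this
    linarith [this]
  have hE : ∑ k, μ k * h k * Real.exp (f k)
      = ∑ k, μ k * h k * Real.exp (u k) + μ i * h i * (Real.exp (u i + s) - Real.exp (u i)) := by
    have : ∑ k, (μ k * h k * Real.exp (f k) - μ k * h k * Real.exp (u k))
        = μ i * h i * (Real.exp (u i + s) - Real.exp (u i)) := by
      rw [Finset.sum_eq_single i]
      · rw [hfi]; ring
      · intro k _ hk; rw [hfne k hk]; ring
      · intro hi; exact absurd (Finset.mem_univ i) hi
    rw [Finset.sum_sub_distrib] at this
    linarith [this]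
  unfold kwEnergy
  rw [hQ, hL, hE]
  ring

set_option maxHeartbeats 1000000 in
/-- If the constant `A` is a strict sub solution and `ψ ≥ A` is a strict super solution,
then any minimizer `u` of the functional `I` over `K = {f : A ≤ f ≤ ψ}` satisfies
`A < u_i < ψ_i` for every vertex `i`. -/
theorem stmt_12 {V : Type*} [Fintype V] (G : SimpleGraph V) [DecidableRel G.Adj]
    (hconn : G.Connected)
    (μ : V → ℝ) (hμ : ∀ i, 0 < μ i)
    (ω : V → V → ℝ) (hsym : ∀ i j, ω i j = ω j i)
    (hω : ∀ i j, G.Adj i j → 0 < ω i j)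
    (h : V → ℝ) (c : ℝ) (A : ℝ)
    (hsub : ∀ i, -c + h i * Real.exp A > 0)
    (ψ : V → ℝ)
    (hsuper : ∀ i, glap G μ ω ψ i - c + h i * Real.exp (ψ i) < 0)
    (hAψ : ∀ i, A ≤ ψ i)
    (u : V → ℝ)
    (huK : ∀ i, A ≤ u i ∧ u i ≤ ψ i)
    (hmin : ∀ f : V → ℝ, (∀ i, A ≤ f i ∧ f i ≤ ψ i) →
      kwEnergy G μ ω c h u ≤ kwEnergy G μ ω c h f) :
    ∀ i, A < u i ∧ u i < ψ i := by
  classical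
  -- Step 0: A < ψ everywhere
  have hAψs : ∀ i, A < ψ i := by
    intro i
    rcases lt_or_eq_of_le (hAψ i) with hlt | heq
    · exact hlt
    · exfalso
      have hg : 0 ≤ glap G μ ω ψ i := by
        unfold glap
        apply mul_nonneg
        · have := hμ i; positivity
        · apply Finset.sum_nonneg
          intro j hj
          have hadj : G.Adj i j := by simpa using hj
          have := hω i j hadj
          have := hAψ j
          nlinarith [heq ▸ this]
      have h1 := hsuper i
      rw [← heq] at h1
      have h2 := hsub i
      linarith
  intro i
  obtain ⟨hA_le, hle_ψ⟩ := huK i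
  set S := ∑ j ∈ G.neighborFinset i, ω i j * (u i - u j) with hSdef
  set W := ∑ j ∈ G.neighborFinset i, ω i j with hWdef
  have hW : 0 ≤ W := by
    apply Finset.sum_nonneg
    intro j hj
    exact (hω i j (by simpa using hj)).le
  constructor
  · -- A < u i
    by_contra hc
    push_neg at hc
    have hui : u i = A := le_antisymm hc hA_le
    have hS : S ≤ 0 := by
      apply Finset.sum_nonpos
      intro j hj
      have hadj : G.Adj i j := by simpa using hj
      have h1 := hω i j hadj
      have h2 := (huK j).1
      nlinarith [hui ▸ h2]
    set b := h i * Real.exp A with hbdef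
    have hb : c < b := by have := hsub i; linarith
    set C := W / 2 + μ i * |b| + 1 with hCdef
    have hC : 0 < C := by have := hμ i; positivity
    set t := min (min 1 (ψ i - A)) (μ i * (b - c) / (2 * C)) with htdef
    have hμi := hμ i
    have ht0 : 0 < t := by
      apply lt_min (lt_min one_pos (by linarith [hAψs i]))
      apply div_pos (by nlinarith) (by linarith)
    have ht1 : t ≤ 1 := le_trans (min_le_left _ _) (min_le_left _ _)
    have ht2 : t ≤ ψ i - A := le_trans (min_le_left _ _) (min_le_right _ _)
    have ht3 : 2 * C * t ≤ μ i * (b - c) := by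
      have := min_le_right (min 1 (ψ i - A)) (μ i * (b - c) / (2 * C))
      rw [← htdef, le_div_iff₀ (by linarith)] at this
      linarith [this]
    have hadm : ∀ k, A ≤ (Function.update u i (u i + t)) k ∧
        (Function.update u i (u i + t)) k ≤ ψ k := by
      intro k
      by_cases hk : k = i
      · subst hk
        rw [Function.update_self]
        constructor <;> [linarith; linarith [hui]]
      · rw [Function.update_of_ne hk]
        exact huK k
    have hmin' := hmin _ hadm
    rw [kwEnergy_update G μ ω hsym c h u i t, ← hSdef, ← hWdef] at hmin'
    set r := Real.exp t - 1 - t with hrdef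
    have hrb : |r| ≤ t ^ 2 := by
      rw [hrdef]
      exact exp_lin_bound (by rw [abs_of_pos ht0]; exact ht1)
    rw [abs_le] at hrb
    have hexp : Real.exp (u i + t) - Real.exp (u i) = Real.exp A * (t + r) := by
      rw [hui, Real.exp_add, hrdef]; ring
    have heq2 : μ i * h i * (Real.exp (u i + t) - Real.exp (u i))
        = μ i * (b * (t + r)) := by rw [hexp, hbdef]; ring
    have habs1 : b ≤ |b| := le_abs_self b
    have habs2 : -|b| ≤ b := neg_abs_le b
    have hrb1 : (0:ℝ) ≤ t ^ 2 + r := by linarith [hrb.1]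
    have hrb2 : (0:ℝ) ≤ t ^ 2 - r := by linarith [hrb.2]
    have habsb : 0 ≤ |b| := abs_nonneg b
    have hCt : C * t ^ 2 = (W / 2 + μ i * |b| + 1) * t ^ 2 := by rw [hCdef]
    clear_value S W b C t r
    have key : (0:ℝ) ≤ t * S + t ^ 2 / 2 * W + c * (μ i * t)
        - μ i * (b * (t + r)) := by
      linarith [hmin', heq2]
    clear hmin hmin' hexp hrdef htdef hCdef hbdef hSdef hWdef hsub hsuper huK hAψ hAψs
    nlinarith [key, mul_nonneg (mul_nonneg (by linarith : (0:ℝ) ≤ |b| + b) hrb1) hμi.le,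
      mul_nonneg (mul_nonneg (by linarith : (0:ℝ) ≤ |b| - b) hrb2) hμi.le,
      mul_nonpos_of_nonneg_of_nonpos ht0.le hS,
      mul_nonneg (by linarith : (0:ℝ) ≤ μ i * (b - c) - 2 * C * t) ht0.le,
      mul_pos (mul_pos hμi (by linarith : (0:ℝ) < b - c)) ht0,
      hCt, sq_nonneg t, mul_pos ht0 ht0]
  · -- u i < ψ i
    by_contra hc
    push_neg at hc
    have hui : u i = ψ i := le_antisymm hle_ψ hc
    have hglap : μ i * glap G μ ω ψ i
        = ∑ j ∈ G.neighborFinset i, ω i j * (ψ j - ψ i) := by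
      unfold glap
      rw [← mul_assoc, mul_one_div, div_self (hμ i).ne', one_mul]
    have hSge : -S ≤ μ i * glap G μ ω ψ i := by
      rw [hglap, hSdef, ← Finset.sum_neg_distrib]
      apply Finset.sum_le_sum
      intro j hj
      have hadj : G.Adj i j := by simpa using hj
      have h1 := hω i j hadj
      have h2 := (huK j).2
      nlinarith [mul_nonneg h1.le (by linarith : (0:ℝ) ≤ ψ j - u j), hui]
    set b := h i * Real.exp (ψ i) with hbdef
    set L := glap G μ ω ψ i - c + b with hLdef
    have hL : L < 0 := hsuper i
    set C := W / 2 + μ i * |b| + 1 with hCdef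
    have hμi := hμ i
    have hC : 0 < C := by positivity
    set t := min (min 1 (ψ i - A)) (μ i * (-L) / (2 * C)) with htdef
    have ht0 : 0 < t := by
      apply lt_min (lt_min one_pos (by linarith [hAψs i]))
      apply div_pos (by nlinarith) (by linarith)
    have ht1 : t ≤ 1 := le_trans (min_le_left _ _) (min_le_left _ _)
    have ht2 : t ≤ ψ i - A := le_trans (min_le_left _ _) (min_le_right _ _)
    have ht3 : 2 * C * t ≤ μ i * (-L) := by
      have := min_le_right (min 1 (ψ i - A)) (μ i * (-L) / (2 * C))
      rw [← htdef, le_div_iff₀ (by linarith)] at this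
      linarith [this]
    have hadm : ∀ k, A ≤ (Function.update u i (u i + (-t))) k ∧
        (Function.update u i (u i + (-t))) k ≤ ψ k := by
      intro k
      by_cases hk : k = i
      · subst hk
        rw [Function.update_self]
        constructor <;> [linarith [hui]; linarith]
      · rw [Function.update_of_ne hk]
        exact huK k
    have hmin' := hmin _ hadm
    rw [kwEnergy_update G μ ω hsym c h u i (-t), ← hSdef, ← hWdef] at hmin'
    set r := Real.exp (-t) - 1 - (-t) with hrdef
    have hrb : |r| ≤ t ^ 2 := by
      rw [hrdef]
      have := exp_lin_bound (s := -t) (by rw [abs_neg, abs_of_pos ht0]; exact ht1)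
      calc |Real.exp (-t) - 1 - -t| ≤ (-t) ^ 2 := this
        _ = t ^ 2 := by ring
    rw [abs_le] at hrb
    have hexp : Real.exp (u i + (-t)) - Real.exp (u i) = Real.exp (ψ i) * (-t + r) := by
      rw [hui, Real.exp_add, hrdef]; ring
    have heq2 : μ i * h i * (Real.exp (u i + (-t)) - Real.exp (u i))
        = μ i * (b * (-t + r)) := by rw [hexp, hbdef]; ring
    have hsq : ((-t : ℝ)) ^ 2 = t ^ 2 := by ring
    rw [hsq] at hmin'
    have habs1 : b ≤ |b| := le_abs_self b
    have habs2 : -|b| ≤ b := neg_abs_le b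
    have hrb1 : (0:ℝ) ≤ t ^ 2 + r := by linarith [hrb.1]
    have hrb2 : (0:ℝ) ≤ t ^ 2 - r := by linarith [hrb.2]
    have habsb : 0 ≤ |b| := abs_nonneg b
    have hCt : C * t ^ 2 = (W / 2 + μ i * |b| + 1) * t ^ 2 := by rw [hCdef]
    set gL := glap G μ ω ψ i with hgLdef
    have hLg : L = gL - c + b := hLdef
    clear_value S W b C t r L gL
    clear hmin hexp hrdef htdef hCdef hbdef hSdef hWdef hsub hsuper huK hAψ hAψs hglap hLdef hgLdef hadm
    have hbound1 : (-t) * S ≤ t * (μ i * gL) := by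
      have h' : t * (-S) ≤ t * (μ i * gL) := mul_le_mul_of_nonneg_left hSge ht0.le
      linarith
    have key : (0:ℝ) ≤ (-t) * S + t ^ 2 / 2 * W + c * (μ i * (-t))
        - μ i * (b * (-t + r)) := by
      linarith [hmin', heq2]
    clear hmin' hSge heq2 hrb
    nlinarith [key, hbound1,
      mul_nonneg (mul_nonneg (by linarith : (0:ℝ) ≤ |b| + b) hrb1) hμi.le,
      mul_nonneg (mul_nonneg (by linarith : (0:ℝ) ≤ |b| - b) hrb2) hμi.le,
      mul_nonneg (by linarith : (0:ℝ) ≤ μ i * (-L) - 2 * C * t) ht0.le,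
      mul_pos (mul_pos hμi (by linarith : (0:ℝ) < -L)) ht0,
      hCt, hLg, sq_nonneg t, mul_pos ht0 ht0]
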